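/- arXiv:2005.05444 — 3 statements merged into one kernel-verified Lean document; each statement's English description precedes it below -/
import Mathlib

section
/- Let k ≥ 3 be an integer and λ ∈ [0, 1]. Then for every x ∈ (1/k, 1], ψ(λx + (1−λ)/k) ≤ ( λ² / ( (1−λ)·(2(k−1)·log(k−1))/(k(k−2)) + λ ) )·ψ(x). Consequently, the input-restricted KL contraction coefficient of the Potts channel at the uniform input satisfies η_KL(PC_λ, π) ≤ λ² / ( (1−λ)·(2(k−1)·log(k−1))/(k(k−2)) + λ ). -/
open scoped BigOperators

/-- `ψ(x) = log k + x log x + (1-x) log((1-x)/(k-1))`. -/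
noncomputable def psi (k : ℕ) (x : ℝ) : ℝ :=
  Real.log (k : ℝ) + x * Real.log x + (1 - x) * Real.log ((1 - x) / ((k : ℝ) - 1))

/-!
Put `c = 1/k` and `h x = (x - c)² / ψ x`. Since `ψ c = ψ' c = 0` and `1 / ψ'' x = x (1 - x)` is
concave, integrating a nonnegative quadratic form in `γ` against `(x - v) dv` over `[c, x]` yields
`2 ((x - c) ψ' x - ψ x)² ≤ (x - c)² ψ x ψ'' x`, which is exactly `h'' ≤ 0`: so `h` is concave on
`(c, 1]`. By l'Hôpital `h → 2 / ψ'' c = 2 (k - 1) / k²` at `c⁺`, and `h' (1 - c) = 0`, so `h` is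
maximal at `1 - c`, where `pottsConst k * h (1 - c) = 2 (k - 1) / k²`. The chord of `h` from
`(c, 2 (k - 1) / k²)` to `(x, h x)` then gives `h (c + λ (x - c)) ≥ (λ + (1 - λ) pottsConst k) h x`,
which is the claimed bound since `h (c + λ (x - c)) = λ² (x - c)² / ψ (c + λ (x - c))`.
-/

open Set Filter Topology

section Calculus

variable {f f₁ f₂ f₃ f₄ : ℝ → ℝ} {c τ : ℝ}

-- `hf₃_sq` says that `1 / f₂` is concave.
lemma taylor_quadratic_nonneg (hcτ : c ≤ τ)
    (hf : ∀ v ∈ Icc c τ, HasDerivAt f (f₁ v) v) (hf₁ : ∀ v ∈ Icc c τ, HasDerivAt f₁ (f₂ v) v)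
    (hf₂ : ∀ v ∈ Icc c τ, HasDerivAt f₂ (f₃ v) v) (hf₃ : ∀ v ∈ Icc c τ, HasDerivAt f₃ (f₄ v) v)
    (hfc : f c = 0) (hf₁c : f₁ c = 0) (hf₂_pos : ∀ v ∈ Icc c τ, 0 < f₂ v)
    (hf₃_sq : ∀ v ∈ Icc c τ, 2 * f₃ v ^ 2 ≤ f₂ v * f₄ v) (γ : ℝ) :
    0 ≤ f τ * (γ * γ) + 2 * ((τ - c) * f₁ τ - 2 * f τ) * γ
      + ((τ - c) ^ 2 * f₂ τ / 2 - 2 * (τ - c) * f₁ τ + 3 * f τ) := by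
  -- Integrating by parts: `A`, `B`, `C` are antiderivatives of `(τ - v) f₂`, `(τ - v) (v - c) f₃`
  -- and `(τ - v) (v - c)² f₄ / 2` vanishing at `c`; the quadratic form is `γ² A + 2γ B + C` at `τ`.
  set A : ℝ → ℝ := fun v => (τ - v) * f₁ v + f v
  set B : ℝ → ℝ := fun v => (τ - v) * (v - c) * f₂ v - (τ + c - 2 * v) * f₁ v - 2 * f v
  set C : ℝ → ℝ := fun v => (τ - v) * (v - c) ^ 2 / 2 * f₃ v
    - ((τ - v) * (v - c) - (v - c) ^ 2 / 2) * f₂ v + (τ + 2 * c - 3 * v) * f₁ v + 3 * f v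
  have hΘ : ∀ v ∈ Icc c τ, HasDerivAt (fun v => γ ^ 2 * A v + 2 * γ * B v + C v)
      ((τ - v) * (γ ^ 2 * f₂ v + 2 * γ * (v - c) * f₃ v + (v - c) ^ 2 * f₄ v / 2)) v := by
    intro v hv
    have hl := hasDerivAt_id' v
    have hA : HasDerivAt A ((τ - v) * f₂ v) v :=
      (((hl.const_sub τ).mul (hf₁ v hv)).add (hf v hv)).congr_deriv (by ring)
    have hB : HasDerivAt B ((τ - v) * (v - c) * f₃ v) v := by
      refine ((((hl.const_sub τ).mul (hl.sub_const c)).mul (hf₂ v hv)).sub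
        (((hl.const_mul 2).const_sub (τ + c)).mul (hf₁ v hv)) |>.sub
        ((hf v hv).const_mul 2)).congr_deriv ?_
      simp only [Pi.mul_apply]
      ring
    have hC : HasDerivAt C ((τ - v) * (v - c) ^ 2 / 2 * f₄ v) v := by
      refine ((((((hl.const_sub τ).mul ((hl.sub_const c).pow 2)).div_const 2).mul (hf₃ v hv)).sub
        ((((hl.const_sub τ).mul (hl.sub_const c)).sub (((hl.sub_const c).pow 2).div_const 2)).mul
          (hf₂ v hv))).add (((hl.const_mul 3).const_sub (τ + 2 * c)).mul (hf₁ v hv)) |>.add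
        ((hf v hv).const_mul 3)).congr_deriv ?_
      simp only [Pi.mul_apply, Pi.pow_apply, Pi.sub_apply]
      ring
    exact ((hA.const_mul _).add (hB.const_mul _) |>.add hC).congr_deriv (by ring)
  have hmono : MonotoneOn (fun v => γ ^ 2 * A v + 2 * γ * B v + C v) (Icc c τ) := by
    refine monotoneOn_of_hasDerivWithinAt_nonneg (convex_Icc c τ)
      (fun v hv => (hΘ v hv).continuousAt.continuousWithinAt)
      (fun v hv => (hΘ v (interior_subset hv)).hasDerivWithinAt) fun v hv => ?_
    have hv' := interior_subset hv
    rw [interior_Icc] at hv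
    have h₂ := hf₂_pos v hv'
    have h₃ := hf₃_sq v hv'
    have hquad : 0 ≤ γ ^ 2 * f₂ v + 2 * γ * (v - c) * f₃ v + (v - c) ^ 2 * f₄ v / 2 := by
      refine nonneg_of_mul_nonneg_right ?_ h₂
      nlinarith [sq_nonneg (γ * f₂ v + (v - c) * f₃ v), sq_nonneg (v - c)]
    exact mul_nonneg (by linarith [hv.2]) hquad
  have := hmono (left_mem_Icc.2 hcτ) (right_mem_Icc.2 hcτ) hcτ
  simp only [A, B, C, hfc, hf₁c] at this
  linarith

lemma two_mul_sq_sub_le_of_sq_deriv3_le (hcτ : c ≤ τ)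
    (hf : ∀ v ∈ Icc c τ, HasDerivAt f (f₁ v) v) (hf₁ : ∀ v ∈ Icc c τ, HasDerivAt f₁ (f₂ v) v)
    (hf₂ : ∀ v ∈ Icc c τ, HasDerivAt f₂ (f₃ v) v) (hf₃ : ∀ v ∈ Icc c τ, HasDerivAt f₃ (f₄ v) v)
    (hfc : f c = 0) (hf₁c : f₁ c = 0) (hf₂_pos : ∀ v ∈ Icc c τ, 0 < f₂ v)
    (hf₃_sq : ∀ v ∈ Icc c τ, 2 * f₃ v ^ 2 ≤ f₂ v * f₄ v) :
    2 * ((τ - c) * f₁ τ - f τ) ^ 2 ≤ (τ - c) ^ 2 * f τ * f₂ τ := by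
  have := discrim_le_zero
    (taylor_quadratic_nonneg hcτ hf hf₁ hf₂ hf₃ hfc hf₁c hf₂_pos hf₃_sq)
  unfold discrim at this
  linear_combination this / 2

end Calculus

section SqDiv

variable {g g₁ g₂ : ℝ → ℝ} {c x : ℝ}

lemma hasDerivAt_sq_div (hg : HasDerivAt g (g₁ x) x) (hx : g x ≠ 0) :
    HasDerivAt (fun y => (y - c) ^ 2 / g y)
      ((2 * (x - c) * g x - (x - c) ^ 2 * g₁ x) / g x ^ 2) x := by
  refine (((hasDerivAt_id x).sub_const c).pow 2 |>.div hg hx).congr_deriv ?_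
  simp only [Nat.cast_ofNat, id_eq, Nat.add_one_sub_one, pow_one, mul_one, Pi.pow_apply]

lemma concaveOn_sq_div {D : Set ℝ} (hD : Convex ℝ D) (hcont : ContinuousOn g D)
    (hpos : ∀ y ∈ D, 0 < g y) (hg : ∀ y ∈ interior D, HasDerivAt g (g₁ y) y)
    (hg₁ : ∀ y ∈ interior D, HasDerivAt g₁ (g₂ y) y)
    (hineq : ∀ y ∈ interior D, 2 * ((y - c) * g₁ y - g y) ^ 2 ≤ (y - c) ^ 2 * g y * g₂ y) :
    ConcaveOn ℝ D (fun y => (y - c) ^ 2 / g y) := by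
  refine concaveOn_of_hasDerivWithinAt2_nonpos hD
    (((continuous_id.sub continuous_const).pow 2).continuousOn.div hcont fun y hy => (hpos y hy).ne')
    (fun y hy => (hasDerivAt_sq_div (hg y hy) (hpos y (interior_subset hy)).ne').hasDerivWithinAt)
    (f'' := fun y => (2 * ((y - c) * g₁ y - g y) ^ 2 - (y - c) ^ 2 * g y * g₂ y) / g y ^ 3)
    (fun y hy => ?_) (fun y hy => ?_)
  · have hy₀ := (hpos y (interior_subset hy)).ne'
    have := ((((hasDerivAt_id y).sub_const c).const_mul 2).mul (hg y hy)).sub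
      ((((hasDerivAt_id y).sub_const c).pow 2).mul (hg₁ y hy)) |>.div ((hg y hy).pow 2)
      (pow_ne_zero 2 hy₀)
    refine (this.congr_deriv ?_).hasDerivWithinAt
    field_simp
    simp only [id_eq, Nat.cast_ofNat, Nat.add_one_sub_one, pow_one, Pi.pow_apply, Pi.sub_apply,
      Pi.mul_apply]
    ring
  · exact div_nonpos_of_nonpos_of_nonneg (by linarith [hineq y hy])
      (pow_nonneg (hpos y (interior_subset hy)).le 3)

end SqDiv

lemma tendsto_sq_div_nhdsGT {g g₁ g₂ : ℝ → ℝ} {c b : ℝ} (hcb : c < b)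
    (hg : ∀ y ∈ Ico c b, HasDerivAt g (g₁ y) y) (hg₁ : ∀ y ∈ Ico c b, HasDerivAt g₁ (g₂ y) y)
    (hg₂ : ContinuousWithinAt g₂ (Ioi c) c) (hgc : g c = 0) (hg₁c : g₁ c = 0) (hg₂c : g₂ c ≠ 0) :
    Tendsto (fun y => (y - c) ^ 2 / g y) (𝓝[>] c) (𝓝 (2 / g₂ c)) := by
  have hc : c ∈ Ico c b := ⟨le_rfl, hcb⟩
  have hlin : ∀ y, HasDerivAt (fun y => 2 * (y - c)) 2 y := fun y => by
    simpa using ((hasDerivAt_id y).sub_const c).const_mul 2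
  have hsq : ∀ y, HasDerivAt (fun y => (y - c) ^ 2) (2 * (y - c)) y := fun y => by
    refine (((hasDerivAt_id y).sub_const c).pow 2).congr_deriv ?_
    simp
  have hright : ∀ {φ : ℝ → ℝ}, ContinuousAt φ c → Tendsto φ (𝓝[>] c) (𝓝 (φ c)) :=
    fun h => h.continuousWithinAt.tendsto
  have hratio₁ : Tendsto (fun y => g₁ y / (2 * (y - c))) (𝓝[>] c) (𝓝 (g₂ c / 2)) :=
    HasDerivAt.lhopital_zero_right_on_Ioo hcb (fun y hy => hg₁ y (Ioo_subset_Ico_self hy))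
      (fun y _ => hlin y) (fun _ _ => two_ne_zero)
      (by simpa [hg₁c] using hright (hg₁ c hc).continuousAt)
      (by simpa using hright (hlin c).continuousAt)
      (hg₂.tendsto.div_const 2)
  have hratio : Tendsto (fun y => g y / (y - c) ^ 2) (𝓝[>] c) (𝓝 (g₂ c / 2)) :=
    HasDerivAt.lhopital_zero_right_on_Ioo hcb (fun y hy => hg y (Ioo_subset_Ico_self hy))
      (fun y _ => hsq y) (fun y hy => by linarith [hy.1])
      (by simpa [hgc] using hright (hg c hc).continuousAt)
      (by simpa using hright (hsq c).continuousAt) hratio₁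
  simpa [inv_div] using hratio.inv₀ (div_ne_zero hg₂c two_ne_zero)

lemma ConcaveOn.sub_mul_add_sub_mul_le_of_tendsto {f : ℝ → ℝ} {a b L s x : ℝ}
    (hf : ConcaveOn ℝ (Ioc a b) f) (hL : Tendsto f (𝓝[>] a) (𝓝 L))
    (has : a < s) (hsx : s ≤ x) (hxb : x ≤ b) :
    (s - a) * f x + (x - s) * L ≤ (x - a) * f s := by
  have hslope : ∀ y, a < y → Tendsto (fun ε => slope f ε y) (𝓝[>] a) (𝓝 ((f y - L) / (y - a))) :=
    fun y hy => by
      simp only [slope_def_field]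
      refine (tendsto_const_nhds.sub hL).div ?_ (sub_pos.2 hy).ne'
      exact ((continuous_const.sub continuous_id).tendsto a).mono_left nhdsWithin_le_nhds
  have hanti : ∀ᶠ ε in 𝓝[>] a, slope f ε x ≤ slope f ε s := by
    filter_upwards [Ioo_mem_nhdsGT has] with ε hε
    exact hf.antitoneOn_slope_gt ⟨hε.1, hε.2.le.trans (hsx.trans hxb)⟩
      ⟨⟨has, hsx.trans hxb⟩, hε.2⟩ ⟨⟨has.trans_le hsx, hxb⟩, hε.2.trans_le hsx⟩ hsx
  have := le_of_tendsto_of_tendsto (hslope x (has.trans_le hsx)) (hslope s has) hanti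
  rw [div_le_div_iff₀ (by linarith) (by linarith)] at this
  linear_combination this

lemma ConcaveOn.isMaxOn_of_hasDerivAt_eq_zero {S : Set ℝ} {f : ℝ → ℝ} {x : ℝ}
    (hf : ConcaveOn ℝ S f) (hx : x ∈ interior S) (hfx : HasDerivAt f 0 x) : IsMaxOn f S x := by
  have hrd : derivWithin (-f) (Ioi x) x = 0 := by
    rw [hfx.neg.hasDerivWithinAt.derivWithin (uniqueDiffWithinAt_Ioi x), neg_zero]
  simpa using (hf.neg.isMinOn_of_rightDeriv_eq_zero hx hrd).neg

noncomputable def psiDeriv (k : ℕ) (x : ℝ) : ℝ := Real.log x - Real.log ((1 - x) / ((k : ℝ) - 1))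

section Psi

variable {k : ℕ} {x : ℝ}

lemma psi_eq_mul_log (hk : 1 < k) : psi k = fun x => Real.log k + x * Real.log x
    + ((k : ℝ) - 1) * ((1 - x) / ((k : ℝ) - 1) * Real.log ((1 - x) / ((k : ℝ) - 1))) := by
  have hk₁ : (k : ℝ) - 1 ≠ 0 := sub_ne_zero.2 (by exact_mod_cast hk.ne')
  funext x
  simp only [psi]
  field_simp

lemma continuous_psi (hk : 1 < k) : Continuous (psi k) := by
  rw [psi_eq_mul_log hk]
  exact (continuous_const.add Real.continuous_mul_log).add
    (continuous_const.mul (Real.continuous_mul_log.comp (by fun_prop)))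

lemma hasDerivAt_psi (hk : 1 < k) (hx₀ : x ≠ 0) (hx₁ : x ≠ 1) :
    HasDerivAt (psi k) (psiDeriv k x) x := by
  have hk₁ : (k : ℝ) - 1 ≠ 0 := sub_ne_zero.2 (by exact_mod_cast hk.ne')
  have hy : (1 - x) / ((k : ℝ) - 1) ≠ 0 := div_ne_zero (sub_ne_zero.2 hx₁.symm) hk₁
  rw [psi_eq_mul_log hk]
  refine (((Real.hasDerivAt_mul_log hx₀).const_add _).add (((Real.hasDerivAt_mul_log hy).comp x
    (((hasDerivAt_id' x).const_sub 1).div_const _)).const_mul _)).congr_deriv ?_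
  simp only [psiDeriv]
  field_simp
  ring

lemma hasDerivAt_psiDeriv (hk : 1 < k) (hx₀ : x ≠ 0) (hx₁ : x ≠ 1) :
    HasDerivAt (psiDeriv k) (x⁻¹ + (1 - x)⁻¹) x := by
  have hk₁ : (k : ℝ) - 1 ≠ 0 := sub_ne_zero.2 (by exact_mod_cast hk.ne')
  have hy : (1 - x) / ((k : ℝ) - 1) ≠ 0 := div_ne_zero (sub_ne_zero.2 hx₁.symm) hk₁
  refine ((Real.hasDerivAt_log hx₀).sub
    ((((hasDerivAt_id' x).const_sub 1).div_const _).log hy)).congr_deriv ?_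
  have : 1 - x ≠ 0 := sub_ne_zero.2 hx₁.symm
  field_simp
  ring

lemma hasDerivAt_inv_add_inv_one_sub (hx₀ : x ≠ 0) (hx₁ : x ≠ 1) :
    HasDerivAt (fun y => y⁻¹ + (1 - y)⁻¹) (((1 - x) ^ 2)⁻¹ - (x ^ 2)⁻¹) x := by
  have : 1 - x ≠ 0 := sub_ne_zero.2 hx₁.symm
  refine ((hasDerivAt_inv hx₀).add (((hasDerivAt_id' x).const_sub 1).inv this)).congr_deriv ?_
  simp only [neg_neg, one_div]
  ring

lemma hasDerivAt_inv_sq_one_sub_sub_inv_sq (hx₀ : x ≠ 0) (hx₁ : x ≠ 1) :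
    HasDerivAt (fun y => ((1 - y) ^ 2)⁻¹ - (y ^ 2)⁻¹) (2 * ((x ^ 3)⁻¹ + ((1 - x) ^ 3)⁻¹)) x := by
  have : 1 - x ≠ 0 := sub_ne_zero.2 hx₁.symm
  refine (((((hasDerivAt_id' x).const_sub 1).pow 2).inv (pow_ne_zero 2 this)).sub
    (((hasDerivAt_id' x).pow 2).inv (pow_ne_zero 2 hx₀))).congr_deriv ?_
  simp only [Pi.pow_apply]
  field_simp
  ring

lemma two_mul_sq_le_inv_add_inv_one_sub_mul (hx₀ : 0 < x) (hx₁ : x < 1) :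
    2 * (((1 - x) ^ 2)⁻¹ - (x ^ 2)⁻¹) ^ 2 ≤ (x⁻¹ + (1 - x)⁻¹) * (2 * ((x ^ 3)⁻¹ + ((1 - x) ^ 3)⁻¹)) := by
  have ha : 0 < x⁻¹ := inv_pos.2 hx₀
  have hb : 0 < (1 - x)⁻¹ := inv_pos.2 (sub_pos.2 hx₁)
  simp only [← inv_pow]
  nlinarith [mul_pos (mul_pos ha hb) (sq_pos_of_pos (add_pos ha hb))]

lemma psi_inv (hk : 1 < k) : psi k (k : ℝ)⁻¹ = 0 := by
  have hk₀ : (k : ℝ) ≠ 0 := by positivity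
  have hk₁ : (k : ℝ) - 1 ≠ 0 := sub_ne_zero.2 (by exact_mod_cast hk.ne')
  have : (1 - (k : ℝ)⁻¹) / ((k : ℝ) - 1) = (k : ℝ)⁻¹ := by field_simp
  rw [psi, this, Real.log_inv]
  ring

lemma psiDeriv_inv (hk : 1 < k) : psiDeriv k (k : ℝ)⁻¹ = 0 := by
  have hk₀ : (k : ℝ) ≠ 0 := by positivity
  have hk₁ : (k : ℝ) - 1 ≠ 0 := sub_ne_zero.2 (by exact_mod_cast hk.ne')
  have : (1 - (k : ℝ)⁻¹) / ((k : ℝ) - 1) = (k : ℝ)⁻¹ := by field_simp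
  rw [psiDeriv, this, sub_self]

lemma log_one_sub_inv_natCast (hk : 1 < k) :
    Real.log (1 - (k : ℝ)⁻¹) = Real.log ((k : ℝ) - 1) - Real.log k := by
  have hk₀ : (k : ℝ) ≠ 0 := by positivity
  have hk₁ : (k : ℝ) - 1 ≠ 0 := sub_ne_zero.2 (by exact_mod_cast hk.ne')
  rw [← Real.log_div hk₁ hk₀]
  congr 1
  field_simp

lemma log_inv_div_sub_one (hk : 1 < k) :
    Real.log ((k : ℝ)⁻¹ / ((k : ℝ) - 1)) = -Real.log k - Real.log ((k : ℝ) - 1) := by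
  have hk₁ : (k : ℝ) - 1 ≠ 0 := sub_ne_zero.2 (by exact_mod_cast hk.ne')
  rw [Real.log_div (by positivity) hk₁, Real.log_inv]

lemma psi_one_sub_inv (hk : 1 < k) :
    psi k (1 - (k : ℝ)⁻¹) = (1 - 2 * (k : ℝ)⁻¹) * Real.log ((k : ℝ) - 1) := by
  rw [psi, sub_sub_cancel, log_one_sub_inv_natCast hk, log_inv_div_sub_one hk]
  ring

lemma psiDeriv_one_sub_inv (hk : 1 < k) :
    psiDeriv k (1 - (k : ℝ)⁻¹) = 2 * Real.log ((k : ℝ) - 1) := by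
  rw [psiDeriv, sub_sub_cancel, log_one_sub_inv_natCast hk, log_inv_div_sub_one hk]
  ring

lemma psiDeriv_pos (hk : 1 < k) (hx₀ : (k : ℝ)⁻¹ < x) (hx₁ : x < 1) : 0 < psiDeriv k x := by
  have hk₀ : (0 : ℝ) < k := by positivity
  have hk₁ : (0 : ℝ) < k - 1 := sub_pos.2 (by exact_mod_cast hk)
  have hkx : 1 < k * x := (inv_lt_iff_one_lt_mul₀' hk₀).1 hx₀
  refine sub_pos.2 (Real.log_lt_log (div_pos (sub_pos.2 hx₁) hk₁) ?_)
  rw [div_lt_iff₀ hk₁]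
  linarith

lemma psi_pos (hk : 1 < k) (hx₀ : (k : ℝ)⁻¹ < x) (hx₁ : x ≤ 1) : 0 < psi k x := by
  have hc : (0 : ℝ) < (k : ℝ)⁻¹ := by positivity
  have hmono : StrictMonoOn (psi k) (Icc (k : ℝ)⁻¹ 1) := by
    refine strictMonoOn_of_hasDerivWithinAt_pos (f' := psiDeriv k) (convex_Icc _ _)
      (continuous_psi hk).continuousOn
      (fun y hy => ?_) fun y hy => ?_ <;> rw [interior_Icc] at hy
    · exact (hasDerivAt_psi hk (hc.trans hy.1).ne' hy.2.ne).hasDerivWithinAt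
    · exact psiDeriv_pos hk hy.1 hy.2
  simpa [psi_inv hk] using
    hmono ⟨le_rfl, (hx₀.trans_le hx₁).le⟩ ⟨hx₀.le, hx₁⟩ hx₀

lemma two_mul_sq_sub_psi_le (hk : 1 < k) (hx₀ : (k : ℝ)⁻¹ < x) (hx₁ : x < 1) :
    2 * ((x - (k : ℝ)⁻¹) * psiDeriv k x - psi k x) ^ 2
      ≤ (x - (k : ℝ)⁻¹) ^ 2 * psi k x * (x⁻¹ + (1 - x)⁻¹) := by
  have hc : (0 : ℝ) < (k : ℝ)⁻¹ := by positivity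
  have hv : ∀ v ∈ Icc (k : ℝ)⁻¹ x, 0 < v ∧ v < 1 := fun v hv =>
    ⟨hc.trans_le hv.1, hv.2.trans_lt hx₁⟩
  refine two_mul_sq_sub_le_of_sq_deriv3_le (f₂ := fun y => y⁻¹ + (1 - y)⁻¹)
    (f₃ := fun y => ((1 - y) ^ 2)⁻¹ - (y ^ 2)⁻¹) (f₄ := fun y => 2 * ((y ^ 3)⁻¹ + ((1 - y) ^ 3)⁻¹))
    hx₀.le (fun v h => hasDerivAt_psi hk (hv v h).1.ne' (hv v h).2.ne)
    (fun v h => hasDerivAt_psiDeriv hk (hv v h).1.ne' (hv v h).2.ne)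
    (fun v h => hasDerivAt_inv_add_inv_one_sub (hv v h).1.ne' (hv v h).2.ne)
    (fun v h => hasDerivAt_inv_sq_one_sub_sub_inv_sq (hv v h).1.ne' (hv v h).2.ne)
    (psi_inv hk) (psiDeriv_inv hk)
    (fun v h => add_pos (inv_pos.2 (hv v h).1) (inv_pos.2 (sub_pos.2 (hv v h).2)))
    (fun v h => two_mul_sq_le_inv_add_inv_one_sub_mul (hv v h).1 (hv v h).2)

end Psi

noncomputable def psiRatio (k : ℕ) (x : ℝ) : ℝ := (x - (k : ℝ)⁻¹) ^ 2 / psi k x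

noncomputable def pottsConst (k : ℕ) : ℝ :=
  2 * ((k : ℝ) - 1) * Real.log ((k : ℝ) - 1) / ((k : ℝ) * ((k : ℝ) - 2))

section PsiRatio

variable {k : ℕ} {x : ℝ}

lemma concaveOn_psiRatio (hk : 1 < k) : ConcaveOn ℝ (Ioc (k : ℝ)⁻¹ 1) (psiRatio k) := by
  have hc : (0 : ℝ) < (k : ℝ)⁻¹ := by positivity
  refine concaveOn_sq_div (convex_Ioc _ _) (continuous_psi hk).continuousOn
    (fun y hy => psi_pos hk hy.1 hy.2) (g₁ := psiDeriv k) (g₂ := fun y => y⁻¹ + (1 - y)⁻¹)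
    (fun y hy => ?_) (fun y hy => ?_) (fun y hy => ?_) <;> rw [interior_Ioc] at hy
  · exact hasDerivAt_psi hk (hc.trans hy.1).ne' hy.2.ne
  · exact hasDerivAt_psiDeriv hk (hc.trans hy.1).ne' hy.2.ne
  · exact two_mul_sq_sub_psi_le hk hy.1 hy.2

lemma tendsto_psiRatio (hk : 1 < k) :
    Tendsto (psiRatio k) (𝓝[>] (k : ℝ)⁻¹) (𝓝 (2 * ((k : ℝ) - 1) / k ^ 2)) := by
  have hk₀ : (0 : ℝ) < k := by positivity
  have hk₁ : (1 : ℝ) < k := by exact_mod_cast hk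
  have hc : (k : ℝ)⁻¹ < 1 := inv_lt_one_of_one_lt₀ hk₁
  have hv : ∀ v ∈ Ico (k : ℝ)⁻¹ 1, v ≠ 0 ∧ v ≠ 1 := fun v hv =>
    ⟨((inv_pos.2 hk₀).trans_le hv.1).ne', hv.2.ne⟩
  have := tendsto_sq_div_nhdsGT hc (fun v h => hasDerivAt_psi hk (hv v h).1 (hv v h).2)
    (fun v h => hasDerivAt_psiDeriv hk (hv v h).1 (hv v h).2)
    (hasDerivAt_inv_add_inv_one_sub (hv _ ⟨le_rfl, hc⟩).1
      (hv _ ⟨le_rfl, hc⟩).2).continuousAt.continuousWithinAt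
    (psi_inv hk) (psiDeriv_inv hk) (add_pos (inv_pos.2 (inv_pos.2 hk₀)) (inv_pos.2 (sub_pos.2 hc))).ne'
  have hsum : (k : ℝ)⁻¹⁻¹ + (1 - (k : ℝ)⁻¹)⁻¹ = k ^ 2 / (k - 1) := by
    have : (k : ℝ) - 1 ≠ 0 := (sub_pos.2 hk₁).ne'
    have : (k : ℝ) ≠ 0 := hk₀.ne'
    field_simp
    ring
  rw [hsum, div_div_eq_mul_div] at this
  exact this

lemma psiRatio_le_psiRatio_one_sub_inv (hk : 2 < k) (hx : x ∈ Ioc (k : ℝ)⁻¹ 1) :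
    psiRatio k x ≤ psiRatio k (1 - (k : ℝ)⁻¹) := by
  have hk₁ : 1 < k := by omega
  have hk₂ : (2 : ℝ) < k := by exact_mod_cast hk
  have hk₀ : (0 : ℝ) < k := by positivity
  have hc : 2 * (k : ℝ)⁻¹ < 1 := by
    rw [← div_eq_mul_inv, div_lt_one hk₀]; exact hk₂
  have hmem : 1 - (k : ℝ)⁻¹ ∈ Ioo (k : ℝ)⁻¹ 1 := ⟨by linarith, by simpa using hk₀⟩
  have hderiv : HasDerivAt (psiRatio k) 0 (1 - (k : ℝ)⁻¹) := by
    refine (hasDerivAt_sq_div (hasDerivAt_psi hk₁ ((inv_pos.2 hk₀).trans hmem.1).ne' hmem.2.ne)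
      (psi_pos hk₁ hmem.1 hmem.2.le).ne').congr_deriv ?_
    rw [psi_one_sub_inv hk₁, psiDeriv_one_sub_inv hk₁]
    ring
  exact (concaveOn_psiRatio hk₁).isMaxOn_of_hasDerivAt_eq_zero (by rwa [interior_Ioc]) hderiv hx

lemma pottsConst_pos (hk : 2 < k) : 0 < pottsConst k := by
  have hk₂ : (2 : ℝ) < k := by exact_mod_cast hk
  have : 0 < Real.log ((k : ℝ) - 1) := Real.log_pos (by linarith)
  unfold pottsConst
  exact div_pos (mul_pos (by linarith) this) (mul_pos (by linarith) (by linarith))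

lemma pottsConst_mul_psiRatio_one_sub_inv (hk : 2 < k) :
    pottsConst k * psiRatio k (1 - (k : ℝ)⁻¹) = 2 * ((k : ℝ) - 1) / k ^ 2 := by
  have hk₂ : (2 : ℝ) < k := by exact_mod_cast hk
  have hk₀ : (k : ℝ) ≠ 0 := by positivity
  have hlog : Real.log ((k : ℝ) - 1) ≠ 0 := (Real.log_pos (by linarith)).ne'
  have h₂ : (k : ℝ) - 2 ≠ 0 := by linarith
  have h₂' : 1 - 2 * (k : ℝ)⁻¹ ≠ 0 := by
    field_simp
    exact div_ne_zero h₂ hk₀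
  rw [pottsConst, psiRatio, psi_one_sub_inv (by omega)]
  field_simp
  ring

end PsiRatio

lemma one_sub_mul_add_pos {a t : ℝ} (ha : 0 < a) (ht : t ∈ Icc (0 : ℝ) 1) :
    0 < (1 - t) * a + t := by
  rcases ht.2.lt_or_eq with ht₁ | rfl
  · nlinarith [ht.1]
  · norm_num

lemma psi_le_of_mem_Ioc {k : ℕ} (hk : 2 < k) {x lam : ℝ} (hx : x ∈ Ioc (k : ℝ)⁻¹ 1)
    (hlam : lam ∈ Icc (0 : ℝ) 1) :
    psi k (lam * x + (1 - lam) / k) ≤ lam ^ 2 / ((1 - lam) * pottsConst k + lam) * psi k x := by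
  have hk₁ : 1 < k := by omega
  obtain ⟨hx₀, hx₁⟩ := hx
  rcases hlam.1.eq_or_lt with rfl | hlam₀
  · simp [psi_inv hk₁]
  have ht : 0 < x - (k : ℝ)⁻¹ := sub_pos.2 hx₀
  have hs : lam * x + (1 - lam) / k - (k : ℝ)⁻¹ = lam * (x - (k : ℝ)⁻¹) := by ring
  have hxs : x - (lam * x + (1 - lam) / k) = (1 - lam) * (x - (k : ℝ)⁻¹) := by ring
  have hcs : (k : ℝ)⁻¹ < lam * x + (1 - lam) / k := by nlinarith
  have hsx : lam * x + (1 - lam) / k ≤ x := by nlinarith [hlam.2]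
  have hchord := (concaveOn_psiRatio hk₁).sub_mul_add_sub_mul_le_of_tendsto
    (tendsto_psiRatio hk₁) hcs hsx hx₁
  rw [hs, hxs] at hchord
  have hmax : pottsConst k * psiRatio k x ≤ 2 * ((k : ℝ) - 1) / k ^ 2 :=
    pottsConst_mul_psiRatio_one_sub_inv hk ▸ mul_le_mul_of_nonneg_left
      (psiRatio_le_psiRatio_one_sub_inv hk ⟨hx₀, hx₁⟩) (pottsConst_pos hk).le
  have key : ((1 - lam) * pottsConst k + lam) * psiRatio k x
      ≤ psiRatio k (lam * x + (1 - lam) / k) := by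
    refine le_of_mul_le_mul_left ?_ ht
    linear_combination hchord +
      mul_le_mul_of_nonneg_left hmax (mul_nonneg (sub_nonneg.2 hlam.2) ht.le)
  have hPx := psi_pos hk₁ hx₀ hx₁
  have hPs := psi_pos hk₁ hcs (hsx.trans hx₁)
  have hD := one_sub_mul_add_pos (pottsConst_pos hk) hlam
  rw [psiRatio, psiRatio, hs, mul_div_assoc', div_le_div_iff₀ hPx hPs] at key
  rw [div_mul_eq_mul_div, le_div_iff₀ hD]
  refine le_of_mul_le_mul_left ?_ (pow_pos ht 2)
  linear_combination key

/-- Upper bound on the input-restricted KL contraction coefficient of ferromagnetic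
Potts channels: for `λ ∈ [0,1]` and `x ∈ (1/k,1]`,
`ψ(λx+(1−λ)/k) ≤ (λ²/((1−λ)·2(k−1)log(k−1)/(k(k−2)) + λ))·ψ(x)`, and hence
`η_KL(PC_λ, π) ≤ λ²/((1−λ)·2(k−1)log(k−1)/(k(k−2)) + λ)`. -/
theorem potts_eta_upper_ferro (k : ℕ) (hk : 3 ≤ k)
    (lam : ℝ) (hlam : lam ∈ Set.Icc (0 : ℝ) 1) :
    (∀ x ∈ Set.Ioc (1 / (k : ℝ)) 1,
      psi k (lam * x + (1 - lam) / (k : ℝ))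
        ≤ lam ^ 2 / ((1 - lam) * (2 * ((k : ℝ) - 1) * Real.log ((k : ℝ) - 1)
            / ((k : ℝ) * ((k : ℝ) - 2))) + lam) * psi k x) ∧
    sSup {r : ℝ | ∃ x ∈ Set.Ioc (1 / (k : ℝ)) 1,
        r = psi k (lam * x + (1 - lam) / (k : ℝ)) / psi k x}
      ≤ lam ^ 2 / ((1 - lam) * (2 * ((k : ℝ) - 1) * Real.log ((k : ℝ) - 1)
          / ((k : ℝ) * ((k : ℝ) - 2))) + lam) := by
  have hbound : ∀ x ∈ Ioc (1 / (k : ℝ)) 1, psi k (lam * x + (1 - lam) / k)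
      ≤ lam ^ 2 / ((1 - lam) * pottsConst k + lam) * psi k x := fun x hx =>
    psi_le_of_mem_Ioc hk (by rwa [one_div] at hx) hlam
  refine ⟨hbound, Real.sSup_le ?_ ?_⟩
  · rintro r ⟨x, hx, rfl⟩
    have hx' : x ∈ Ioc (k : ℝ)⁻¹ 1 := by rwa [one_div] at hx
    rw [div_le_iff₀ (psi_pos (by omega) hx'.1 hx'.2)]
    exact hbound x hx
  · exact div_nonneg (sq_nonneg lam) (one_sub_mul_add_pos (pottsConst_pos hk) hlam).le
end

section
/- Let k ≥ 2 be an integer. Define g : [0,1] → ℝ by g(x) = (kx−1)²/ψ(x) for x ≠ 1/k, and g(1/k) = 2(k−1) (the limiting value, making g continuous). Then g is concave on [0,1]. -/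
open Real Set MeasureTheory

lemma inv_add_le_sq_div_add_sq_div {p q : ℝ} (hp : 0 < p) (hq : 0 < q) (τ : ℝ) :
    (p + q)⁻¹ ≤ τ ^ 2 / p + (1 - τ) ^ 2 / q := by
  rw [div_add_div _ _ hp.ne' hq.ne', inv_le_iff_one_le_mul₀ (by positivity),
    div_mul_eq_mul_div, le_div_iff₀ (by positivity)]
  nlinarith [sq_nonneg (τ * q - (1 - τ) * p)]

theorem concaveOn_inv_integral_div {α E : Type*} [MeasurableSpace α] {μ : Measure α}
    [AddCommGroup E] [Module ℝ E] {s : Set E} {w : α → ℝ} {q : E → α → ℝ}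
    (hs : Convex ℝ s) (hw : ∀ᵐ t ∂μ, 0 ≤ w t) (hq : ∀ᵐ t ∂μ, ConcaveOn ℝ s (q · t))
    (hq_pos : ∀ x ∈ s, ∀ᵐ t ∂μ, 0 < q x t)
    (hint : ∀ x ∈ s, Integrable (fun t => w t / q x t) μ)
    (hpos : ∀ x ∈ s, 0 < ∫ t, w t / q x t ∂μ) :
    ConcaveOn ℝ s (fun x => (∫ t, w t / q x t ∂μ)⁻¹) := by
  refine ⟨hs, fun x hx y hy a b ha hb hab => ?_⟩
  rcases ha.eq_or_lt with rfl | ha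
  · simp [show b = 1 by linarith]
  rcases hb.eq_or_lt with rfl | hb
  · simp [show a = 1 by linarith]
  have hz := hs hx hy ha.le hb.le hab
  set A := ∫ t, w t / q x t ∂μ
  set B := ∫ t, w t / q y t ∂μ
  have hA : 0 < A := hpos x hx
  have hB : 0 < B := hpos y hy
  have hZ := hpos _ hz
  -- the value of `τ` minimizing the right-hand side of `hbound`
  set τ := a * B / (a * B + b * A)
  have hbound : ∫ t, w t / q (a • x + b • y) t ∂μ ≤ τ ^ 2 / a * A + (1 - τ) ^ 2 / b * B := by
    rw [← integral_const_mul, ← integral_const_mul,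
      ← integral_add ((hint x hx).const_mul _) ((hint y hy).const_mul _)]
    refine integral_mono_ae (hint _ hz) (((hint x hx).const_mul _).add ((hint y hy).const_mul _)) ?_
    filter_upwards [hw, hq, hq_pos x hx, hq_pos y hy] with t hwt hqt hxt hyt
    have hmid : a * q x t + b * q y t ≤ q (a • x + b • y) t := hqt.2 hx hy ha.le hb.le hab
    have key := inv_add_le_sq_div_add_sq_div (mul_pos ha hxt) (mul_pos hb hyt) τ
    calc w t / q (a • x + b • y) t ≤ w t * (a * q x t + b * q y t)⁻¹ := by
          rw [div_eq_mul_inv]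
          exact mul_le_mul_of_nonneg_left (inv_anti₀ (by positivity) hmid) hwt
      _ ≤ w t * (τ ^ 2 / (a * q x t) + (1 - τ) ^ 2 / (b * q y t)) :=
          mul_le_mul_of_nonneg_left key hwt
      _ = τ ^ 2 / a * (w t / q x t) + (1 - τ) ^ 2 / b * (w t / q y t) := by
          field_simp
  have hopt : τ ^ 2 / a * A + (1 - τ) ^ 2 / b * B = (a * A⁻¹ + b * B⁻¹)⁻¹ := by
    have : 0 < a * B + b * A := by positivity
    simp only [τ]
    field_simp
    ring
  rw [hopt] at hbound
  simpa [smul_eq_mul] using inv_anti₀ hZ hbound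

lemma ContinuousOn.const_mul_log {α : Type*} [TopologicalSpace α] {f : α → ℝ} {s : Set α}
    (c : ℝ) (hf : ContinuousOn f s) (h : ∀ t ∈ s, f t = 0 → c = 0) :
    ContinuousOn (fun t => c * Real.log (f t)) s := by
  rcases eq_or_ne c 0 with rfl | hc
  · simpa using continuousOn_const
  · exact continuousOn_const.mul (hf.log fun t ht hft => hc (h t ht hft))

noncomputable def bernoulliKL (p x : ℝ) : ℝ :=
  x * log x + (1 - x) * log (1 - x) - x * log p - (1 - x) * log (1 - p)

noncomputable def bernoulliKLKernel (p x t : ℝ) : ℝ :=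
  (1 - t) / (((1 - t) * p + t * x) * (1 - ((1 - t) * p + t * x)))

noncomputable def bernoulliKLRemainder (p x : ℝ) : ℝ :=
  ∫ t in (0 : ℝ)..1, bernoulliKLKernel p x t

lemma concaveOn_lerp_mul_one_sub_lerp (p t : ℝ) :
    ConcaveOn ℝ univ fun x => ((1 - t) * p + t * x) * (1 - ((1 - t) * p + t * x)) := by
  refine ⟨convex_univ, fun x _ y _ a b ha hb hab => ?_⟩
  obtain rfl : b = 1 - a := by linarith
  simp only [smul_eq_mul]
  nlinarith [mul_nonneg (mul_nonneg ha hb) (sq_nonneg (t * (x - y)))]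

section Kernel

variable {p x t : ℝ}

lemma lerp_mem_Ioo (hp : p ∈ Ioo 0 1) (hx : x ∈ Icc 0 1) (ht : t ∈ Ico 0 1) :
    (1 - t) * p + t * x ∈ Ioo 0 1 := by
  obtain ⟨hp0, hp1⟩ := hp
  obtain ⟨hx0, hx1⟩ := hx
  obtain ⟨ht0, ht1⟩ := ht
  constructor <;> nlinarith [mul_nonneg ht0 hx0, mul_nonneg ht0 (sub_nonneg.2 hx1)]

lemma bernoulliKLKernel_pos (hp : p ∈ Ioo 0 1) (hx : x ∈ Icc 0 1) (ht : t ∈ Ico 0 1) :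
    0 < bernoulliKLKernel p x t := by
  obtain ⟨hu0, hu1⟩ := lerp_mem_Ioo hp hx ht
  have : 0 < 1 - t := sub_pos.2 ht.2
  unfold bernoulliKLKernel
  exact div_pos this (mul_pos hu0 (sub_pos.2 hu1))

lemma bernoulliKLKernel_le (hp : p ∈ Ioo 0 1) (hx : x ∈ Icc 0 1) (ht : t ∈ Ico 0 1) :
    bernoulliKLKernel p x t ≤ p⁻¹ + (1 - p)⁻¹ := by
  obtain ⟨hu0, hu1⟩ := lerp_mem_Ioo hp hx ht
  set u := (1 - t) * p + t * x
  have h1t : 0 < 1 - t := sub_pos.2 ht.2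
  have hp0 : 0 < p := hp.1
  have hp1 : 0 < 1 - p := sub_pos.2 hp.2
  have hu : 0 < 1 - u := sub_pos.2 hu1
  have hsplit : bernoulliKLKernel p x t = (1 - t) / u + (1 - t) / (1 - u) := by
    change (1 - t) / (u * (1 - u)) = _
    field_simp
    ring
  have hl : (1 - t) / u ≤ p⁻¹ := calc
    (1 - t) / u ≤ (1 - t) / ((1 - t) * p) :=
      div_le_div_of_nonneg_left h1t.le (by positivity) (by nlinarith [ht.1, hx.1])
    _ = p⁻¹ := by field_simp
  have hr : (1 - t) / (1 - u) ≤ (1 - p)⁻¹ := calc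
    (1 - t) / (1 - u) ≤ (1 - t) / ((1 - t) * (1 - p)) :=
      div_le_div_of_nonneg_left h1t.le (by positivity) (by nlinarith [ht.1, hx.2])
    _ = (1 - p)⁻¹ := by field_simp
  linarith

lemma integrableOn_bernoulliKLKernel (hp : p ∈ Ioo 0 1) (hx : x ∈ Icc 0 1) :
    IntegrableOn (bernoulliKLKernel p x) (Ioo 0 1) := by
  refine IntegrableOn.of_bound (by simp) ?_ (p⁻¹ + (1 - p)⁻¹) ?_
  · have : Measurable (bernoulliKLKernel p x) := by unfold bernoulliKLKernel; fun_prop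
    exact this.aestronglyMeasurable
  · refine ae_restrict_of_forall_mem measurableSet_Ioo fun t ht => ?_
    have ht' : t ∈ Ico 0 1 := Ioo_subset_Ico_self ht
    rw [Real.norm_of_nonneg (bernoulliKLKernel_pos hp hx ht').le]
    exact bernoulliKLKernel_le hp hx ht'

lemma intervalIntegrable_bernoulliKLKernel (hp : p ∈ Ioo 0 1) (hx : x ∈ Icc 0 1) :
    IntervalIntegrable (bernoulliKLKernel p x) volume 0 1 :=
  (intervalIntegrable_iff_integrableOn_Ioo_of_le zero_le_one).2
    (integrableOn_bernoulliKLKernel hp hx)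

lemma hasDerivAt_antideriv_bernoulliKLKernel (hp : p ∈ Ioo 0 1) (hx : x ∈ Icc 0 1) (hxp : x ≠ p)
    (ht : t ∈ Ico 0 1) :
    HasDerivAt (fun t => (x * log ((1 - t) * p + t * x)
        + (1 - x) * log (1 - ((1 - t) * p + t * x))) / (x - p) ^ 2)
      (bernoulliKLKernel p x t) t := by
  obtain ⟨hu0, hu1⟩ := lerp_mem_Ioo hp hx ht
  have hu : HasDerivAt (fun t => (1 - t) * p + t * x) (x - p) t := by
    refine ((((hasDerivAt_id t).const_sub 1).mul_const p).add
      ((hasDerivAt_id t).mul_const x)).congr_deriv ?_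
    ring
  refine ((((hu.log hu0.ne').const_mul x).add
    (((hu.const_sub 1).log (sub_pos.2 hu1).ne').const_mul (1 - x))).div_const
      ((x - p) ^ 2)).congr_deriv ?_
  have hxu : x - ((1 - t) * p + t * x) = (1 - t) * (x - p) := by ring
  unfold bernoulliKLKernel
  generalize (1 - t) * p + t * x = u at hu0 hu1 hxu ⊢
  have hxp' : x - p ≠ 0 := sub_ne_zero.2 hxp
  have h1u : 1 - u ≠ 0 := (sub_pos.2 hu1).ne'
  field_simp
  linear_combination hxu

end Kernel

section Remainder

variable {p x : ℝ}

lemma bernoulliKL_eq_sq_mul_bernoulliKLRemainder (hp : p ∈ Ioo 0 1) (hx : x ∈ Icc 0 1) :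
    bernoulliKL p x = (x - p) ^ 2 * bernoulliKLRemainder p x := by
  rcases eq_or_ne x p with rfl | hxp
  · simp only [bernoulliKL, sub_self]
    ring
  -- at `t = 1` the logarithms may hit `log 0`, but then their coefficient `x` or `1 - x` vanishes
  have hcont : ContinuousOn (fun t => (x * log ((1 - t) * p + t * x)
      + (1 - x) * log (1 - ((1 - t) * p + t * x))) / (x - p) ^ 2) (Icc 0 1) := by
    refine (ContinuousOn.add (.const_mul_log _ (by fun_prop) fun t ht hu => ?_)
      (.const_mul_log _ (by fun_prop) fun t ht hu => ?_)).div_const _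
    all_goals
      rcases eq_or_lt_of_le ht.2 with rfl | ht1
      · simp only [sub_self, zero_mul, one_mul, zero_add] at hu
        linarith
      · have := lerp_mem_Ioo hp hx ⟨ht.1, ht1⟩
        simp only [mem_Ioo] at this
        linarith
  rw [bernoulliKLRemainder, intervalIntegral.integral_eq_sub_of_hasDerivAt_of_le zero_le_one hcont
    (fun t ht => hasDerivAt_antideriv_bernoulliKLKernel hp hx hxp (Ioo_subset_Ico_self ht))
    (intervalIntegrable_bernoulliKLKernel hp hx)]
  have hxp' : x - p ≠ 0 := sub_ne_zero.2 hxp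
  simp only [sub_self, zero_mul, one_mul, zero_add, sub_zero, add_zero]
  field_simp
  unfold bernoulliKL
  ring

lemma bernoulliKLRemainder_self (hp : p ∈ Ioo 0 1) :
    bernoulliKLRemainder p p = (2 * p * (1 - p))⁻¹ := by
  have hkernel : bernoulliKLKernel p p = fun t => (1 - t) / (p * (1 - p)) := by
    ext t
    simp only [bernoulliKLKernel]
    ring_nf
  have hp0 : p ≠ 0 := hp.1.ne'
  have hp1 : 1 - p ≠ 0 := (sub_pos.2 hp.2).ne'
  have hmass : ∫ t in (0 : ℝ)..1, (1 - t) = 1 / 2 := by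
    rw [intervalIntegral.integral_sub intervalIntegrable_const
      intervalIntegral.intervalIntegrable_id]
    norm_num
  rw [bernoulliKLRemainder, hkernel, intervalIntegral.integral_div, hmass]
  field_simp

lemma bernoulliKLRemainder_pos (hp : p ∈ Ioo 0 1) (hx : x ∈ Icc 0 1) :
    0 < bernoulliKLRemainder p x :=
  intervalIntegral.intervalIntegral_pos_of_pos_on (intervalIntegrable_bernoulliKLKernel hp hx)
    (fun _ ht => bernoulliKLKernel_pos hp hx (Ioo_subset_Ico_self ht)) zero_lt_one

lemma bernoulliKLRemainder_eq_setIntegral (p x : ℝ) :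
    bernoulliKLRemainder p x = ∫ t in Ioo 0 1, bernoulliKLKernel p x t := by
  rw [bernoulliKLRemainder, intervalIntegral.integral_of_le zero_le_one,
    integral_Ioc_eq_integral_Ioo]

theorem concaveOn_inv_bernoulliKLRemainder (hp : p ∈ Ioo 0 1) :
    ConcaveOn ℝ (Icc 0 1) fun x => (bernoulliKLRemainder p x)⁻¹ := by
  have hae {P : ℝ → Prop} (h : ∀ t ∈ Ioo (0 : ℝ) 1, P t) : ∀ᵐ t ∂volume.restrict (Ioo 0 1), P t :=
    ae_restrict_of_forall_mem measurableSet_Ioo h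
  simp only [bernoulliKLRemainder_eq_setIntegral]
  refine concaveOn_inv_integral_div (convex_Icc 0 1) (hae fun t ht => sub_nonneg.2 ht.2.le)
    (hae fun t _ => (concaveOn_lerp_mul_one_sub_lerp p t).subset (subset_univ _) (convex_Icc 0 1))
    (fun x hx => hae fun t ht => ?_) (fun x hx => integrableOn_bernoulliKLKernel hp hx)
    (fun x hx => bernoulliKLRemainder_eq_setIntegral p x ▸ bernoulliKLRemainder_pos hp hx)
  obtain ⟨hu0, hu1⟩ := lerp_mem_Ioo hp hx (Ioo_subset_Ico_self ht)
  exact mul_pos hu0 (sub_pos.2 hu1)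

end Remainder

theorem concaveOn_sq_div_bernoulliKL {p : ℝ} (hp : p ∈ Ioo 0 1) :
    ConcaveOn ℝ (Icc 0 1) fun x =>
      if x = p then 2 * p * (1 - p) else (x - p) ^ 2 / bernoulliKL p x := by
  refine (concaveOn_inv_bernoulliKLRemainder hp).congr fun x hx => ?_
  dsimp only
  split_ifs with hxp
  · rw [hxp, bernoulliKLRemainder_self hp, inv_inv]
  · rw [bernoulliKL_eq_sq_mul_bernoulliKLRemainder hp hx,
      div_mul_cancel_left₀ (pow_ne_zero 2 (sub_ne_zero.2 hxp))]

lemma psi_eq_bernoulliKL {k : ℕ} (hk : 1 < k) (x : ℝ) : psi k x = bernoulliKL (1 / k) x := by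
  have hk0 : (k : ℝ) ≠ 0 := by positivity
  have hk1 : (k : ℝ) - 1 ≠ 0 := sub_ne_zero.2 (by exact_mod_cast hk.ne')
  have hlog : log (1 - 1 / k) = log ((k : ℝ) - 1) - log k := by
    rw [← log_div hk1 hk0]
    congr 1
    field_simp
  rw [psi, bernoulliKL, hlog, one_div, log_inv]
  rcases eq_or_ne (1 - x) 0 with hx | hx
  · simp only [hx, zero_mul]
    obtain rfl : x = 1 := by linarith
    ring
  · rw [log_div hx hk1]
    ring

/-- The function `x ↦ (kx−1)²/ψ(x)` (with value `2(k−1)` at `x = 1/k`) is concave on `[0,1]`. -/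
theorem kx_sub_one_sq_div_psi_concave (k : ℕ) (hk : 2 ≤ k) :
    ConcaveOn ℝ (Set.Icc (0 : ℝ) 1)
      (fun x => if x = 1 / (k : ℝ) then 2 * ((k : ℝ) - 1)
        else ((k : ℝ) * x - 1) ^ 2 / psi k x) := by
  have hk' : (2 : ℝ) ≤ k := by exact_mod_cast hk
  have hp : 1 / (k : ℝ) ∈ Ioo 0 1 := ⟨by positivity, by rw [div_lt_one (by positivity)]; linarith⟩
  refine ((concaveOn_sq_div_bernoulliKL hp).smul (sq_nonneg (k : ℝ))).congr fun x _ => ?_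
  have hk0 : (k : ℝ) ≠ 0 := by positivity
  simp only [smul_eq_mul, psi_eq_bernoulliKL hk]
  split_ifs
  · field_simp
  · rw [← mul_div_assoc]
    congr 1
    field_simp
end

section
/- Let x₀ < x₁ be real numbers and let g, f : [x₀, x₁] → ℝ be restrictions of infinitely differentiable functions defined on an open interval containing [x₀, x₁]. Assume g is strictly increasing with image [y₀, y₁] = [g(x₀), g(x₁)], that g′(x₀) = 0 and f′(x₀) = 0, and that g″(x₀)·f‴(x₀) − f″(x₀)·g‴(x₀) > 0. Then the function h = f ∘ g⁻¹ : [y₀, y₁] → ℝ is not concave near y₀: there exists δ > 0 such that the function u = g′·f″ − f′·g″ is strictly positive on (x₀, x₀+δ), hence h is strictly convex on (y₀, g(x₀+δ)); in particular h is not concave on any interval [y₀, y₀+ε] with 0 < ε ≤ y₁ − y₀. -/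
open Set

/-- ladder lemma: v(x₀)=0, v' > 0 on (x₀, t) ⇒ v > 0 on (x₀, t). -/
lemma ladder_aux {v v' : ℝ → ℝ} {x₀ t : ℝ}
    (hc : ContinuousOn v (Icc x₀ t))
    (hd : ∀ x ∈ Ioo x₀ t, HasDerivAt v (v' x) x)
    (hpos : ∀ x ∈ Ioo x₀ t, 0 < v' x)
    (h0 : v x₀ = 0) : ∀ x ∈ Ioo x₀ t, 0 < v x := by
  intro x hx
  have hmono : StrictMonoOn v (Icc x₀ t) := by
    apply strictMonoOn_of_deriv_pos (convex_Icc _ _) hc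
    intro y hy
    rw [interior_Icc] at hy
    rw [(hd y hy).deriv]
    exact hpos y hy
  have := hmono (left_mem_Icc.2 (le_of_lt (hx.1.trans hx.2))) ⟨hx.1.le, hx.2.le⟩ hx.1
  linarith [h0 ▸ this]

lemma ladder_aux_neg {v v' : ℝ → ℝ} {x₀ t : ℝ}
    (hc : ContinuousOn v (Icc x₀ t))
    (hd : ∀ x ∈ Ioo x₀ t, HasDerivAt v (v' x) x)
    (hneg : ∀ x ∈ Ioo x₀ t, v' x < 0)
    (h0 : v x₀ = 0) : ∀ x ∈ Ioo x₀ t, v x < 0 := by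
  intro x hx
  have := ladder_aux (v := fun y => -v y) (v' := fun y => -v' y)
    (hc.neg) (fun y hy => (hd y hy).neg) (fun y hy => by simpa using hneg y hy)
    (by simp [h0]) x hx
  simpa using this

lemma smooth_deriv_chain {a b : ℝ} {F : ℝ → ℝ} (hF : ContDiffOn ℝ (⊤ : ℕ∞) F (Ioo a b)) :
    ContDiffOn ℝ (⊤ : ℕ∞) (deriv F) (Ioo a b) :=
  hF.deriv_of_isOpen isOpen_Ioo (by simp)

lemma hda_of_smooth {a b : ℝ} {F : ℝ → ℝ} (hF : ContDiffOn ℝ (⊤ : ℕ∞) F (Ioo a b)) {x : ℝ}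
    (hx : x ∈ Ioo a b) : HasDerivAt F (deriv F x) x :=
  ((hF.differentiableOn (by simp) x hx).differentiableAt (isOpen_Ioo.mem_nhds hx)).hasDerivAt

/-- from positivity at `x₀` and continuity, positivity on a right interval. -/
lemma pos_near {a b x₀ x₁ : ℝ} (ha : a < x₀) (hx : x₀ < x₁) (hb : x₁ < b) {v : ℝ → ℝ}
    (hc : ContinuousOn v (Ioo a b)) (h0 : 0 < v x₀) :
    ∃ δ > 0, x₀ + δ ≤ x₁ ∧ ∀ x ∈ Icc x₀ (x₀ + δ), 0 < v x := by
  have hx₀ : x₀ ∈ Ioo a b := ⟨ha, hx.trans hb⟩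
  have hca : ContinuousAt v x₀ :=
    (hc x₀ hx₀).continuousAt (isOpen_Ioo.mem_nhds hx₀)
  have hev : ∀ᶠ y in nhds x₀, v y ∈ Ioi 0 := hca (Ioi_mem_nhds h0)
  rw [Metric.eventually_nhds_iff] at hev
  obtain ⟨η, hη, hball⟩ := hev
  refine ⟨min (η / 2) (x₁ - x₀), lt_min (by linarith) (by linarith), ?_, ?_⟩
  · have : min (η / 2) (x₁ - x₀) ≤ x₁ - x₀ := min_le_right _ _
    linarith
  · intro y hy
    apply hball
    have h1 := hy.1
    have h2 := hy.2
    have h3 : min (η / 2) (x₁ - x₀) ≤ η / 2 := min_le_left _ _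
    rw [Real.dist_eq, abs_lt]
    constructor <;> nlinarith

/-- General non-concavity lemma: if `g` is smooth and strictly increasing on `[x₀,x₁]` with
`g′(x₀) = f′(x₀) = 0` and `g″(x₀)f‴(x₀) − f″(x₀)g‴(x₀) > 0`, then `h = f ∘ g⁻¹` is not
concave near `y₀ = g(x₀)`: the function `u = g′f″ − f′g″` is strictly positive on some
`(x₀, x₀+δ)`, `h` is strictly convex on `(g(x₀), g(x₀+δ))`, and `h` is not concave on any
interval `[y₀, y₀+ε]` with `0 < ε ≤ g(x₁) − g(x₀)`. -/
theorem not_concave_near_of_wronskian_pos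
    (x₀ x₁ a b : ℝ) (hx : x₀ < x₁) (ha : a < x₀) (hb : x₁ < b)
    (f g : ℝ → ℝ)
    (hf : ContDiffOn ℝ (⊤ : ℕ∞) f (Set.Ioo a b)) (hg : ContDiffOn ℝ (⊤ : ℕ∞) g (Set.Ioo a b))
    (hmono : StrictMonoOn g (Set.Icc x₀ x₁))
    (hg1 : deriv g x₀ = 0) (hf1 : deriv f x₀ = 0)
    (hwron : 0 < iteratedDeriv 2 g x₀ * iteratedDeriv 3 f x₀
      - iteratedDeriv 2 f x₀ * iteratedDeriv 3 g x₀)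
    (ginv : ℝ → ℝ) (hginv : ∀ x ∈ Set.Icc x₀ x₁, ginv (g x) = x) :
    ∃ δ > 0, x₀ + δ ≤ x₁ ∧
      (∀ x ∈ Set.Ioo x₀ (x₀ + δ),
        0 < deriv g x * iteratedDeriv 2 f x - deriv f x * iteratedDeriv 2 g x) ∧
      StrictConvexOn ℝ (Set.Ioo (g x₀) (g (x₀ + δ))) (f ∘ ginv) ∧
      ∀ ε : ℝ, 0 < ε → ε ≤ g x₁ - g x₀ →
        ¬ ConcaveOn ℝ (Set.Icc (g x₀) (g x₀ + ε)) (f ∘ ginv) := by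
  -- abbreviations for higher derivatives
  set g1 := deriv g with hg1def
  set g2 := deriv g1 with hg2def
  set g3 := deriv g2 with hg3def
  set g4 := deriv g3 with hg4def
  set f1 := deriv f with hf1def
  set f2 := deriv f1 with hf2def
  set f3 := deriv f2 with hf3def
  set f4 := deriv f3 with hf4def
  have e2 : ∀ F : ℝ → ℝ, iteratedDeriv 2 F = deriv (deriv F) := by
    intro F
    rw [show (2 : ℕ) = 1 + 1 from rfl, iteratedDeriv_succ, iteratedDeriv_one]
  have e3 : ∀ F : ℝ → ℝ, iteratedDeriv 3 F = deriv (deriv (deriv F)) := by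
    intro F
    rw [show (3 : ℕ) = 2 + 1 from rfl, iteratedDeriv_succ, e2]
  rw [e2, e2, e3, e3] at hwron
  simp only [← hg1def, ← hf1def, ← hg2def, ← hf2def, ← hg3def, ← hf3def] at hwron
  -- smoothness of derivative chains
  have hg1s : ContDiffOn ℝ (⊤ : ℕ∞) g1 (Ioo a b) := smooth_deriv_chain hg
  have hg2s : ContDiffOn ℝ (⊤ : ℕ∞) g2 (Ioo a b) := smooth_deriv_chain hg1s
  have hg3s : ContDiffOn ℝ (⊤ : ℕ∞) g3 (Ioo a b) := smooth_deriv_chain hg2s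
  have hf1s : ContDiffOn ℝ (⊤ : ℕ∞) f1 (Ioo a b) := smooth_deriv_chain hf
  have hf2s : ContDiffOn ℝ (⊤ : ℕ∞) f2 (Ioo a b) := smooth_deriv_chain hf1s
  have hf3s : ContDiffOn ℝ (⊤ : ℕ∞) f3 (Ioo a b) := smooth_deriv_chain hf2s
  have hsub : ∀ {t : ℝ}, t ≤ x₁ → Icc x₀ t ⊆ Ioo a b := by
    intro t ht y hy
    exact ⟨lt_of_lt_of_le ha hy.1, lt_of_le_of_lt (hy.2.trans ht) hb⟩
  have hsubO : ∀ {t : ℝ}, t ≤ x₁ → Ioo x₀ t ⊆ Ioo a b := fun ht =>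
    (Ioo_subset_Icc_self).trans (hsub ht)
  -- the function u and its derivatives
  set u : ℝ → ℝ := fun x => g1 x * f2 x - f1 x * g2 x with hudef
  set u' : ℝ → ℝ := fun x => g1 x * f3 x - f1 x * g3 x with hu'def
  set u'' : ℝ → ℝ := fun x => g2 x * f3 x + g1 x * f4 x - (f2 x * g3 x + f1 x * g4 x)
    with hu''def
  have hud : ∀ x ∈ Ioo a b, HasDerivAt u (u' x) x := by
    intro x hxm
    have h1 := (hda_of_smooth hg1s hxm).mul (hda_of_smooth hf2s hxm)
    have h2 := (hda_of_smooth hf1s hxm).mul (hda_of_smooth hg2s hxm)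
    have := h1.sub h2
    refine this.congr_deriv ?_
    simp only [hu'def, hg2def, hf3def, hf2def, hg3def]
    ring
  have hu'd : ∀ x ∈ Ioo a b, HasDerivAt u' (u'' x) x := by
    intro x hxm
    have h1 := (hda_of_smooth hg1s hxm).mul (hda_of_smooth hf3s hxm)
    have h2 := (hda_of_smooth hf1s hxm).mul (hda_of_smooth hg3s hxm)
    exact h1.sub h2
  have hu''c : ContinuousOn u'' (Ioo a b) := by
    apply ContinuousOn.sub
    · exact (hg2s.continuousOn.mul hf3s.continuousOn).add
        (hg1s.continuousOn.mul (smooth_deriv_chain hf3s).continuousOn)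
    · exact (hf2s.continuousOn.mul hg3s.continuousOn).add
        (hf1s.continuousOn.mul (smooth_deriv_chain hg3s).continuousOn)
  have hu''0 : 0 < u'' x₀ := by
    simp only [hu''def]
    rw [hg1, hf1]
    simpa using hwron
  -- δ₀ : u > 0 on (x₀, x₀+δ₀)
  obtain ⟨δ₀, hδ₀, hδ₀le, hu''pos⟩ := pos_near ha hx hb hu''c hu''0
  have hu'pos : ∀ x ∈ Ioo x₀ (x₀ + δ₀), 0 < u' x := by
    apply ladder_aux (v' := u'')
    · apply ContinuousOn.sub
      · exact (hg1s.continuousOn.mul hf3s.continuousOn).mono (hsub hδ₀le)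
      · exact (hf1s.continuousOn.mul hg3s.continuousOn).mono (hsub hδ₀le)
    · exact fun x hxm => hu'd x (hsubO hδ₀le hxm)
    · exact fun x hxm => hu''pos x ⟨hxm.1.le, hxm.2.le⟩
    · simp only [hu'def]; rw [hg1, hf1]; ring
  have hupos : ∀ x ∈ Ioo x₀ (x₀ + δ₀), 0 < u x := by
    apply ladder_aux (v' := u')
    · apply ContinuousOn.sub
      · exact (hg1s.continuousOn.mul hf2s.continuousOn).mono (hsub hδ₀le)
      · exact (hf1s.continuousOn.mul hg2s.continuousOn).mono (hsub hδ₀le)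
    · exact fun x hxm => hud x (hsubO hδ₀le hxm)
    · exact hu'pos
    · simp only [hudef]; rw [hg1, hf1]; ring
  -- g1 > 0 on some right interval
  have hnotneg : ∀ t, x₀ < t → t ≤ x₁ → ¬ (∀ x ∈ Ioo x₀ t, g1 x < 0) := by
    intro t ht ht' hcontra
    have hanti : StrictAntiOn g (Icc x₀ t) := by
      apply strictAntiOn_of_deriv_neg (convex_Icc _ _) (hg.continuousOn.mono (hsub ht'))
      intro y hy
      rw [interior_Icc] at hy
      exact hcontra y hy
    have h1 := hanti (left_mem_Icc.2 ht.le) (right_mem_Icc.2 ht.le) ht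
    have h2 := hmono (left_mem_Icc.2 hx.le) ⟨ht.le, ht'⟩ ht
    linarith
  have hladder_pos : ∀ (v : ℝ → ℝ), ContDiffOn ℝ (⊤ : ℕ∞) v (Ioo a b) → v x₀ = 0 →
      ∀ t, t ≤ x₁ → (∀ x ∈ Ioo x₀ t, 0 < deriv v x) → ∀ x ∈ Ioo x₀ t, 0 < v x := by
    intro v hvs hv0 t ht hd
    exact ladder_aux (hvs.continuousOn.mono (hsub ht))
      (fun x hxm => hda_of_smooth hvs (hsubO ht hxm)) hd hv0
  have hladder_neg : ∀ (v : ℝ → ℝ), ContDiffOn ℝ (⊤ : ℕ∞) v (Ioo a b) → v x₀ = 0 →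
      ∀ t, t ≤ x₁ → (∀ x ∈ Ioo x₀ t, deriv v x < 0) → ∀ x ∈ Ioo x₀ t, v x < 0 := by
    intro v hvs hv0 t ht hd
    exact ladder_aux_neg (hvs.continuousOn.mono (hsub ht))
      (fun x hxm => hda_of_smooth hvs (hsubO ht hxm)) hd hv0
  have hg1posEx : ∃ δ₁ > 0, x₀ + δ₁ ≤ x₁ ∧ ∀ x ∈ Ioo x₀ (x₀ + δ₁), 0 < g1 x := by
    rcases lt_trichotomy (g2 x₀) 0 with hc2 | hc2 | hc2
    · -- g2 x₀ < 0 : contradiction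
      exfalso
      obtain ⟨δ, hδ, hδle, hpos⟩ := pos_near ha hx hb hg2s.continuousOn.neg (by simpa using hc2)
      have hg2neg : ∀ x ∈ Ioo x₀ (x₀ + δ), g2 x < 0 := fun x hxm => by
        have := hpos x ⟨hxm.1.le, hxm.2.le⟩; simpa using this
      have := hladder_neg g1 hg1s hg1 _ hδle (fun x hxm => hg2neg x hxm)
      exact hnotneg _ (by linarith) hδle this
    · -- g2 x₀ = 0
      rcases lt_trichotomy (g3 x₀) 0 with hc3 | hc3 | hc3
      · exfalso
        obtain ⟨δ, hδ, hδle, hpos⟩ := pos_near ha hx hb hg3s.continuousOn.neg (by simpa using hc3)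
        have hg3neg : ∀ x ∈ Ioo x₀ (x₀ + δ), g3 x < 0 := fun x hxm => by
          have := hpos x ⟨hxm.1.le, hxm.2.le⟩; simpa using this
        have h2 := hladder_neg g2 hg2s hc2 _ hδle hg3neg
        have h1 := hladder_neg g1 hg1s hg1 _ hδle h2
        exact hnotneg _ (by linarith) hδle h1
      · exfalso
        rw [hc2, hc3] at hwron
        simp at hwron
      · obtain ⟨δ, hδ, hδle, hpos⟩ := pos_near ha hx hb hg3s.continuousOn hc3
        have hg3pos : ∀ x ∈ Ioo x₀ (x₀ + δ), 0 < g3 x := fun x hxm =>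
          hpos x ⟨hxm.1.le, hxm.2.le⟩
        have h2 := hladder_pos g2 hg2s hc2 _ hδle hg3pos
        have h1 := hladder_pos g1 hg1s hg1 _ hδle h2
        exact ⟨δ, hδ, hδle, h1⟩
    · obtain ⟨δ, hδ, hδle, hpos⟩ := pos_near ha hx hb hg2s.continuousOn hc2
      have hg2pos : ∀ x ∈ Ioo x₀ (x₀ + δ), 0 < g2 x := fun x hxm =>
        hpos x ⟨hxm.1.le, hxm.2.le⟩
      exact ⟨δ, hδ, hδle, hladder_pos g1 hg1s hg1 _ hδle hg2pos⟩
  obtain ⟨δ₁, hδ₁, hδ₁le, hg1pos'⟩ := hg1posEx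
  -- the final δ
  set δ := min δ₀ δ₁ with hδdef
  have hδpos : 0 < δ := lt_min hδ₀ hδ₁
  set t := x₀ + δ with htdef
  have htle : t ≤ x₁ := le_trans (by simp only [htdef, hδdef]; linarith [min_le_left δ₀ δ₁]) hδ₀le
  have hxt : x₀ < t := by simp only [htdef]; linarith
  have hIoosub₀ : Ioo x₀ t ⊆ Ioo x₀ (x₀ + δ₀) := by
    apply Ioo_subset_Ioo le_rfl
    simp only [htdef, hδdef]; linarith [min_le_left δ₀ δ₁]
  have hIoosub₁ : Ioo x₀ t ⊆ Ioo x₀ (x₀ + δ₁) := by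
    apply Ioo_subset_Ioo le_rfl
    simp only [htdef, hδdef]; linarith [min_le_right δ₀ δ₁]
  have hg1pos : ∀ x ∈ Ioo x₀ t, 0 < g1 x := fun x hxm => hg1pos' x (hIoosub₁ hxm)
  have hul : ∀ x ∈ Ioo x₀ t, 0 < u x := fun x hxm => hupos x (hIoosub₀ hxm)
  have hIccsub : Icc x₀ t ⊆ Icc x₀ x₁ := Icc_subset_Icc le_rfl htle
  -- strict monotonicity of f1 / g1
  have hr : StrictMonoOn (fun x => f1 x / g1 x) (Ioo x₀ t) := by
    apply strictMonoOn_of_deriv_pos (convex_Ioo _ _)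
    · exact ContinuousOn.div
        (hf1s.continuousOn.mono ((hsubO htle)))
        (hg1s.continuousOn.mono ((hsubO htle)))
        (fun x hxm => (hg1pos x hxm).ne')
    · intro x hxm
      rw [interior_Ioo] at hxm
      have hxab : x ∈ Ioo a b := hsubO htle hxm
      have hdiv : HasDerivAt (fun y => f1 y / g1 y)
          ((f2 x * g1 x - f1 x * g2 x) / g1 x ^ 2) x :=
        (hda_of_smooth hf1s hxab).div (hda_of_smooth hg1s hxab) (hg1pos x hxm).ne'
      rw [hdiv.deriv]
      apply div_pos
      · have := hul x hxm; simp only [hudef] at this; linarith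
      · exact pow_pos (hg1pos x hxm) 2
  -- slope computation via Cauchy MVT
  have hslope : ∀ p q, p ∈ Ioo x₀ t → q ∈ Ioo x₀ t → p < q →
      ∃ ξ ∈ Ioo p q, (f q - f p) / (g q - g p) = f1 ξ / g1 ξ := by
    intro p q hp hq hpq
    have hpqsub : Icc p q ⊆ Ioo a b := by
      apply (Icc_subset_Icc hp.1.le hq.2.le).trans
      intro y hy
      exact hsub htle ⟨hy.1, hy.2⟩
    have hpqsubO : Ioo p q ⊆ Ioo x₀ t := Ioo_subset_Ioo hp.1.le hq.2.le
    obtain ⟨ξ, hξ, hξeq⟩ := exists_ratio_hasDerivAt_eq_ratio_slope f f1 hpq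
      (hf.continuousOn.mono hpqsub)
      (fun x hxm => hda_of_smooth hf (hpqsub (Ioo_subset_Icc_self hxm)))
      g g1 (hg.continuousOn.mono hpqsub)
      (fun x hxm => hda_of_smooth hg (hpqsub (Ioo_subset_Icc_self hxm)))
    refine ⟨ξ, hξ, ?_⟩
    have hgpq : g p < g q := hmono (hIccsub ⟨hp.1.le, hp.2.le⟩) (hIccsub ⟨hq.1.le, hq.2.le⟩) hpq
    have hg1ξ : 0 < g1 ξ := hg1pos ξ (hpqsubO hξ)
    rw [div_eq_div_iff (by linarith) hg1ξ.ne']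
    linarith [hξeq]
  -- strict convexity
  have hgx₀t : g x₀ < g t := hmono (left_mem_Icc.2 hx.le) ⟨hxt.le, htle⟩ hxt
  have hpreim : ∀ y ∈ Ioo (g x₀) (g t), ∃ p ∈ Ioo x₀ t, g p = y := by
    intro y hy
    have := intermediate_value_Ioo (le_of_lt hxt) (hg.continuousOn.mono (hsub htle))
    obtain ⟨p, hp, hgp⟩ := this hy
    exact ⟨p, hp, hgp⟩
  have hconv : StrictConvexOn ℝ (Ioo (g x₀) (g t)) (f ∘ ginv) := by
    apply strictConvexOn_of_slope_strict_mono_adjacent (convex_Ioo _ _)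
    intro y₁ y₂ y₃ h1 h3 h12 h23
    have h2 : y₂ ∈ Ioo (g x₀) (g t) := ⟨h1.1.trans h12, h23.trans h3.2⟩
    obtain ⟨p₁, hp₁, hgp₁⟩ := hpreim y₁ h1
    obtain ⟨p₂, hp₂, hgp₂⟩ := hpreim y₂ h2
    obtain ⟨p₃, hp₃, hgp₃⟩ := hpreim y₃ h3
    have hmem : ∀ {p : ℝ}, p ∈ Ioo x₀ t → p ∈ Icc x₀ x₁ := fun hp =>
      hIccsub ⟨hp.1.le, hp.2.le⟩
    have hord : ∀ {p q : ℝ}, p ∈ Ioo x₀ t → q ∈ Ioo x₀ t → g p < g q → p < q := by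
      intro p q hp hq hlt
      by_contra hcon
      push_neg at hcon
      rcases eq_or_lt_of_le hcon with rfl | hqp
      · exact lt_irrefl _ hlt
      · exact absurd (hmono (hmem hq) (hmem hp) hqp) (by linarith)
    have h12' : p₁ < p₂ := hord hp₁ hp₂ (by rw [hgp₁, hgp₂]; exact h12)
    have h23' : p₂ < p₃ := hord hp₂ hp₃ (by rw [hgp₂, hgp₃]; exact h23)
    have hval : ∀ {p : ℝ} {y : ℝ}, p ∈ Ioo x₀ t → g p = y → (f ∘ ginv) y = f p := by
      intro p y hp hgp
      simp only [Function.comp_apply, ← hgp, hginv p (hmem hp)]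
    rw [hval hp₁ hgp₁, hval hp₂ hgp₂, hval hp₃ hgp₃, ← hgp₁, ← hgp₂, ← hgp₃]
    obtain ⟨ξ₁, hξ₁, he₁⟩ := hslope p₁ p₂ hp₁ hp₂ h12'
    obtain ⟨ξ₂, hξ₂, he₂⟩ := hslope p₂ p₃ hp₂ hp₃ h23'
    rw [he₁, he₂]
    have hξ₁m : ξ₁ ∈ Ioo x₀ t := ⟨hp₁.1.trans hξ₁.1, hξ₁.2.trans hp₂.2⟩
    have hξ₂m : ξ₂ ∈ Ioo x₀ t := ⟨hp₂.1.trans hξ₂.1, hξ₂.2.trans hp₃.2⟩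
    exact hr hξ₁m hξ₂m (hξ₁.2.trans hξ₂.1)
  refine ⟨δ, hδpos, htle, ?_, ?_, ?_⟩
  · intro x hxm
    rw [e2, e2]
    exact hul x hxm
  · exact hconv
  · intro ε hε hεle hcon
    set M := min (g x₀ + ε) (g t) with hMdef
    have hM : g x₀ < M := lt_min (by linarith) hgx₀t
    set d := M - g x₀ with hddef
    have hd : 0 < d := by linarith
    set z₁ := g x₀ + d / 4 with hz₁
    set z₃ := g x₀ + 3 * d / 4 with hz₃
    have hMle₁ : M ≤ g x₀ + ε := min_le_left _ _
    have hMle₂ : M ≤ g t := min_le_right _ _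
    have hz₁I : z₁ ∈ Ioo (g x₀) (g t) := ⟨by simp only [hz₁]; linarith, by simp only [hz₁]; linarith⟩
    have hz₃I : z₃ ∈ Ioo (g x₀) (g t) := ⟨by simp only [hz₃]; linarith, by simp only [hz₃]; linarith⟩
    have hz₁c : z₁ ∈ Icc (g x₀) (g x₀ + ε) := ⟨by simp only [hz₁]; linarith, by simp only [hz₁]; linarith⟩
    have hz₃c : z₃ ∈ Icc (g x₀) (g x₀ + ε) := ⟨by simp only [hz₃]; linarith, by simp only [hz₃]; linarith⟩
    have hne : z₁ ≠ z₃ := by simp only [hz₁, hz₃]; intro h; nlinarith [hd]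
    have hlt := hconv.2 hz₁I hz₃I hne (by norm_num : (0:ℝ) < 1/2) (by norm_num : (0:ℝ) < 1/2)
      (by norm_num)
    have hge := hcon.2 hz₁c hz₃c (by norm_num : (0:ℝ) ≤ 1/2) (by norm_num : (0:ℝ) ≤ 1/2)
      (by norm_num)
    simp only [smul_eq_mul] at hlt hge
    linarith
end
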